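/- Let 𝕊 be a quantum system with policy ↝. Suppose that for each agent a ∈ A there is an equivalence relation ∼ₐ on reachable density operators satisfying: (step consistency) if ρ ∼ₐ σ then 𝓔_{b,c}(ρ) ∼ₐ 𝓔_{b,c}(σ) for all b ∈ A and c ∈ C; and (local respect of ↝) if ¬(b ↝ a) then ρ ∼ₐ 𝓔_{b,c}(ρ) for all c ∈ C and all reachable ρ. Then K(𝕊,↝) ≤ sup{ d_a(ρ,σ) : ρ, σ reachable, ρ ∼ₐ σ, a ∈ A }. -/

import Mathlib

open scoped Classical ComplexOrder
open Matrix Kronecker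

noncomputable section

/-- A density operator: positive semidefinite with trace 1. -/
def IsDensity {d : Type} [Fintype d] [DecidableEq d] (ρ : Matrix d d ℂ) : Prop :=
  ρ.PosSemidef ∧ ρ.trace = 1

/-- A super-operator: a linear, positive, trace-preserving map on matrices. -/
def IsSuperOp {d : Type} [Fintype d] [DecidableEq d]
    (F : Matrix d d ℂ → Matrix d d ℂ) : Prop :=
  IsLinearMap ℂ F ∧ (∀ ρ : Matrix d d ℂ, ρ.PosSemidef → (F ρ).PosSemidef) ∧
    (∀ ρ : Matrix d d ℂ, (F ρ).trace = ρ.trace)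

/-- A finite family of matrices (the data of a measurement). -/
structure PMeas (d : Type) where
  m : ℕ
  E : Fin m → Matrix d d ℂ

/-- The family is a POVM: positive semidefinite elements summing to the identity. -/
def PMeas.IsPOVM {d : Type} [Fintype d] [DecidableEq d] (P : PMeas d) : Prop :=
  (∀ i, (P.E i).PosSemidef) ∧ ∑ i, P.E i = 1

/-- The distance between outcome distributions of a measurement on two states. -/
def dE {d : Type} [Fintype d] (P : PMeas d) (ρ σ : Matrix d d ℂ) : ℝ :=
  (1 / 2) * ∑ i, ‖(P.E i * ρ).trace - (P.E i * σ).trace‖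

/-- The measurement pseudo-distance induced by a set of measurements. -/
def dM {d : Type} [Fintype d] (M : Set (PMeas d)) (ρ σ : Matrix d d ℂ) : ℝ :=
  sSup { x | ∃ P ∈ M, x = dE P ρ σ }

/-- A quantum system: initial state, agents, commands, super-operators, measurements. -/
structure QSystem (Agent Cmd d : Type) where
  ρ0 : Matrix d d ℂ
  A : Set Agent
  C : Set Cmd
  Ecmd : Agent → Cmd → Matrix d d ℂ → Matrix d d ℂ
  M : Agent → Set (PMeas d)

/-- Well-formedness: the initial state is a density operator, commands act as
super-operators, and agents measure with POVMs. -/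
def QSystem.WellFormed {Agent Cmd d : Type} [Fintype d] [DecidableEq d]
    (S : QSystem Agent Cmd d) : Prop :=
  IsDensity S.ρ0 ∧ (∀ a ∈ S.A, ∀ c ∈ S.C, IsSuperOp (S.Ecmd a c)) ∧
    (∀ a ∈ S.A, ∀ P ∈ S.M a, P.IsPOVM)

/-- Execution of a finite action sequence (composition of super-operators, in order). -/
def QSystem.run {Agent Cmd d : Type} (S : QSystem Agent Cmd d)
    (α : List (Agent × Cmd)) (ρ : Matrix d d ℂ) : Matrix d d ℂ :=
  α.foldl (fun τ p => S.Ecmd p.1 p.2 τ) ρ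

/-- A sequence over A × C. -/
def QSystem.Valid {Agent Cmd d : Type} (S : QSystem Agent Cmd d)
    (α : List (Agent × Cmd)) : Prop :=
  ∀ p ∈ α, p.1 ∈ S.A ∧ p.2 ∈ S.C

/-- `purge G D α` deletes from `α` every pair `(a, c)` with `a ∈ G` and `c ∈ D`. -/
def purge {Agent Cmd : Type} (G : Set Agent) (D : Set Cmd) :
    List (Agent × Cmd) → List (Agent × Cmd)
  | [] => []
  | p :: rest => if p.1 ∈ G ∧ p.2 ∈ D then purge G D rest else p :: purge G D rest

/-- A reachable density operator. -/
def QSystem.Reachable {Agent Cmd d : Type} (S : QSystem Agent Cmd d)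
    (ρ : Matrix d d ℂ) : Prop :=
  ∃ α, S.Valid α ∧ S.run α S.ρ0 = ρ

/-- `∇ a`: the set of agents from which information may not flow to `a`. -/
def nabla {Agent : Type} (pol : Agent → Agent → Prop) (a : Agent) : Set Agent :=
  { b | ¬ pol b a }

/-- The security degree `K(𝕊,↝)`. -/
def Kdeg {Agent Cmd d : Type} [Fintype d] (S : QSystem Agent Cmd d)
    (pol : Agent → Agent → Prop) : ℝ :=
  sSup { x | ∃ a ∈ S.A, ∃ α, S.Valid α ∧
    x = dM (S.M a) (S.run α S.ρ0) (S.run (purge (nabla pol a) Set.univ α) S.ρ0) }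

/-- The `t`-bounded security degree `K_t(𝕊,↝)`. -/
def Kt {Agent Cmd d : Type} [Fintype d] (S : QSystem Agent Cmd d)
    (pol : Agent → Agent → Prop) (t : ℕ) : ℝ :=
  sSup { x | ∃ a ∈ S.A, ∃ α, S.Valid α ∧ α.length ≤ t ∧
    x = dM (S.M a) (S.run α S.ρ0) (S.run (purge (nabla pol a) Set.univ α) S.ρ0) }

/-- The interference degree `Int(G₁, D | G₂)`. -/
def IntDeg {Agent Cmd d : Type} [Fintype d] (S : QSystem Agent Cmd d)
    (G1 : Set Agent) (D : Set Cmd) (G2 : Set Agent) : ℝ :=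
  sSup { x | ∃ a ∈ G2, ∃ α, S.Valid α ∧
    x = dM (S.M a) (S.run α S.ρ0) (S.run (purge G1 D α) S.ρ0) }

/-- Trace distance `d(ρ,σ) = (1/2)·tr √((ρ−σ)†(ρ−σ))`. -/
def traceDist {d : Type} [Fintype d] [DecidableEq d] (ρ σ : Matrix d d ℂ) : ℝ :=
  (1 / 2) * (((Matrix.posSemidef_conjTranspose_mul_self (ρ - σ)).1.eigenvectorUnitary.1 *
    diagonal (((↑) : ℝ → ℂ) ∘ (√·) ∘ (Matrix.posSemidef_conjTranspose_mul_self (ρ - σ)).1.eigenvalues) *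
    (star (Matrix.posSemidef_conjTranspose_mul_self (ρ - σ)).1.eigenvectorUnitary :
      Matrix d d ℂ)).trace).re

end

/-!
Fix an agent `a`. Running `α` and its purge from related states, induct along `α`: a step by
an agent of `∇a` is dropped from the purged run, and local respect plus transitivity keep the
two states related; any other step is applied to both, and step consistency keeps them related.
Starting from `ρ₀ ∼ₐ ρ₀`, the two final states are reachable and related, so every distance in
the definition of `K(𝕊,↝)` occurs in the set on the right. That set is bounded by `1`, since
reachable states are density operators and POVM outcome distributions are probability vectors.
-/

section Execution

variable {Agent Cmd d : Type}

@[simp]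
lemma QSystem.run_cons (S : QSystem Agent Cmd d) (p : Agent × Cmd) (α : List (Agent × Cmd))
    (ρ : Matrix d d ℂ) : S.run (p :: α) ρ = S.run α (S.Ecmd p.1 p.2 ρ) := rfl

lemma QSystem.run_append (S : QSystem Agent Cmd d) (α β : List (Agent × Cmd))
    (ρ : Matrix d d ℂ) : S.run (α ++ β) ρ = S.run β (S.run α ρ) :=
  List.foldl_append

lemma QSystem.reachable_ρ0 (S : QSystem Agent Cmd d) : S.Reachable S.ρ0 :=
  ⟨[], by simp [QSystem.Valid], rfl⟩

lemma QSystem.Reachable.run {S : QSystem Agent Cmd d} {ρ : Matrix d d ℂ}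
    (hρ : S.Reachable ρ) {α : List (Agent × Cmd)} (hα : S.Valid α) :
    S.Reachable (S.run α ρ) := by
  obtain ⟨β, hβ, rfl⟩ := hρ
  exact ⟨β ++ α, fun p hp => (List.mem_append.mp hp).elim (hβ p) (hα p), S.run_append β α _⟩

lemma QSystem.Reachable.ecmd {S : QSystem Agent Cmd d} {ρ : Matrix d d ℂ}
    (hρ : S.Reachable ρ) {b : Agent} (hb : b ∈ S.A) {c : Cmd} (hc : c ∈ S.C) :
    S.Reachable (S.Ecmd b c ρ) :=
  hρ.run (α := [(b, c)]) (by simpa [QSystem.Valid] using ⟨hb, hc⟩)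

lemma QSystem.valid_cons {S : QSystem Agent Cmd d} {p : Agent × Cmd}
    {α : List (Agent × Cmd)} : S.Valid (p :: α) ↔ (p.1 ∈ S.A ∧ p.2 ∈ S.C) ∧ S.Valid α :=
  List.forall_mem_cons

lemma purge_eq_filter (G : Set Agent) (D : Set Cmd) (α : List (Agent × Cmd)) :
    purge G D α = α.filter fun p => ¬(p.1 ∈ G ∧ p.2 ∈ D) := by
  induction α with
  | nil => rfl
  | cons p α ih => by_cases hp : p.1 ∈ G ∧ p.2 ∈ D <;> simp [purge, List.filter_cons, hp, ih]

lemma QSystem.Valid.purge {S : QSystem Agent Cmd d} {α : List (Agent × Cmd)}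
    (hα : S.Valid α) (G : Set Agent) (D : Set Cmd) : S.Valid (purge G D α) := by
  rw [purge_eq_filter]
  exact fun p hp => hα p (List.mem_of_mem_filter hp)

-- The purged run is kept on the left so that local respect composes with `r` by transitivity.
theorem QSystem.rel_run_purge_run (S : QSystem Agent Cmd d) (G : Set Agent)
    (r : Matrix d d ℂ → Matrix d d ℂ → Prop)
    (htrans : ∀ ρ σ τ, S.Reachable ρ → S.Reachable σ → S.Reachable τ →
      r ρ σ → r σ τ → r ρ τ)
    (hstep : ∀ b ∈ S.A, ∀ c ∈ S.C, ∀ ρ σ, S.Reachable ρ → S.Reachable σ →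
      r ρ σ → r (S.Ecmd b c ρ) (S.Ecmd b c σ))
    (hlocal : ∀ b ∈ S.A, b ∈ G → ∀ c ∈ S.C, ∀ ρ, S.Reachable ρ → r ρ (S.Ecmd b c ρ))
    {α : List (Agent × Cmd)} (hα : S.Valid α) {ρ σ : Matrix d d ℂ}
    (hρ : S.Reachable ρ) (hσ : S.Reachable σ) (hrel : r σ ρ) :
    r (S.run (purge G Set.univ α) σ) (S.run α ρ) := by
  induction α generalizing ρ σ with
  | nil => exact hrel
  | cons p α ih =>
    obtain ⟨⟨hb, hc⟩, hα⟩ := QSystem.valid_cons.mp hα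
    have hρ' := hρ.ecmd hb hc
    by_cases hG : p.1 ∈ G
    · simp only [purge, hG, Set.mem_univ, and_self, if_true, QSystem.run_cons]
      exact ih hα hρ' hσ (htrans _ _ _ hσ hρ hρ' hrel (hlocal _ hb hG _ hc _ hρ))
    · simp only [purge, hG, false_and, if_false, QSystem.run_cons]
      exact ih hα hρ' (hσ.ecmd hb hc) (hstep _ hb _ hc _ _ hσ hρ hrel)

end Execution

section Measurement

variable {d : Type} [Fintype d]

lemma dE_comm (P : PMeas d) (ρ σ : Matrix d d ℂ) : dE P ρ σ = dE P σ ρ := by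
  simp only [dE, norm_sub_rev]

lemma dM_comm (M : Set (PMeas d)) (ρ σ : Matrix d d ℂ) : dM M ρ σ = dM M σ ρ := by
  simp only [dM, dE_comm _ ρ σ]

lemma dM_nonneg (M : Set (PMeas d)) (ρ σ : Matrix d d ℂ) : 0 ≤ dM M ρ σ := by
  refine Real.sSup_nonneg ?_
  rintro x ⟨P, -, rfl⟩
  unfold dE
  positivity

variable [DecidableEq d]

lemma IsSuperOp.isDensity {F : Matrix d d ℂ → Matrix d d ℂ} (hF : IsSuperOp F)
    {ρ : Matrix d d ℂ} (hρ : IsDensity ρ) : IsDensity (F ρ) :=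
  ⟨hF.2.1 ρ hρ.1, (hF.2.2 ρ).trans hρ.2⟩

lemma QSystem.WellFormed.isDensity_of_reachable {Agent Cmd : Type}
    {S : QSystem Agent Cmd d} (hS : S.WellFormed) {ρ : Matrix d d ℂ}
    (hρ : S.Reachable ρ) : IsDensity ρ := by
  obtain ⟨α, hα, rfl⟩ := hρ
  suffices ∀ ρ, IsDensity ρ → IsDensity (S.run α ρ) from this _ hS.1
  induction α with
  | nil => exact fun _ h => h
  | cons p α ih =>
    obtain ⟨⟨hb, hc⟩, hα⟩ := QSystem.valid_cons.mp hα
    exact fun ρ h => ih hα _ ((hS.2.1 _ hb _ hc).isDensity h)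

lemma Matrix.PosSemidef.trace_mul_nonneg {E ρ : Matrix d d ℂ} (hE : E.PosSemidef)
    (hρ : ρ.PosSemidef) : 0 ≤ (E * ρ).trace := by
  open scoped MatrixOrder in
  obtain ⟨B, rfl⟩ := CStarAlgebra.nonneg_iff_eq_star_mul_self.mp hE.nonneg
  rw [Matrix.mul_assoc, Matrix.trace_mul_comm, Matrix.mul_assoc, ← Matrix.mul_assoc,
    Matrix.star_eq_conjTranspose]
  exact (hρ.mul_mul_conjTranspose_same B).trace_nonneg

lemma PMeas.IsPOVM.sum_norm_trace_mul {P : PMeas d} (hP : P.IsPOVM) {ρ : Matrix d d ℂ}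
    (hρ : IsDensity ρ) : ∑ i, ‖(P.E i * ρ).trace‖ = 1 := by
  have hsum : ∑ i, (P.E i * ρ).trace = 1 := by
    rw [← Matrix.trace_sum, ← Finset.sum_mul, hP.2, Matrix.one_mul, hρ.2]
  have hnorm : ∀ i, (‖(P.E i * ρ).trace‖ : ℂ) = (P.E i * ρ).trace := fun i =>
    Complex.norm_of_nonneg' ((hP.1 i).trace_mul_nonneg hρ.1)
  exact_mod_cast (by push_cast [hnorm, hsum]; rfl : ((∑ i, ‖(P.E i * ρ).trace‖ : ℝ) : ℂ) = 1)

lemma dE_le_one {P : PMeas d} (hP : P.IsPOVM) {ρ σ : Matrix d d ℂ}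
    (hρ : IsDensity ρ) (hσ : IsDensity σ) : dE P ρ σ ≤ 1 := by
  have : ∑ i, ‖(P.E i * ρ).trace - (P.E i * σ).trace‖ ≤ 2 :=
    calc ∑ i, ‖(P.E i * ρ).trace - (P.E i * σ).trace‖
        ≤ ∑ i, (‖(P.E i * ρ).trace‖ + ‖(P.E i * σ).trace‖) :=
          Finset.sum_le_sum fun i _ => norm_sub_le _ _
      _ = 2 := by
          rw [Finset.sum_add_distrib, hP.sum_norm_trace_mul hρ, hP.sum_norm_trace_mul hσ]
          norm_num
  unfold dE
  linarith

lemma dM_le_one {M : Set (PMeas d)} (hM : ∀ P ∈ M, P.IsPOVM)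
    {ρ σ : Matrix d d ℂ} (hρ : IsDensity ρ) (hσ : IsDensity σ) : dM M ρ σ ≤ 1 := by
  refine Real.sSup_le ?_ zero_le_one
  rintro x ⟨P, hP, rfl⟩
  exact dE_le_one (hM P hP) hρ hσ

end Measurement

theorem unwinding_I_general {Agent Cmd d : Type} [Fintype d] [DecidableEq d]
    (S : QSystem Agent Cmd d) (hS : S.WellFormed)
    (pol : Agent → Agent → Prop)
    (sim : Agent → Matrix d d ℂ → Matrix d d ℂ → Prop)
    (hrefl : ∀ a ∈ S.A, ∀ ρ, S.Reachable ρ → sim a ρ ρ)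
    (htrans : ∀ a ∈ S.A, ∀ ρ σ τ, S.Reachable ρ → S.Reachable σ → S.Reachable τ →
      sim a ρ σ → sim a σ τ → sim a ρ τ)
    (hstep : ∀ a ∈ S.A, ∀ b ∈ S.A, ∀ c ∈ S.C, ∀ ρ σ, S.Reachable ρ → S.Reachable σ →
      sim a ρ σ → sim a (S.Ecmd b c ρ) (S.Ecmd b c σ))
    (hlocal : ∀ a ∈ S.A, ∀ b ∈ S.A, ¬ pol b a → ∀ c ∈ S.C, ∀ ρ, S.Reachable ρ →
      sim a ρ (S.Ecmd b c ρ)) :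
    Kdeg S pol ≤ sSup { x | ∃ a ∈ S.A, ∃ ρ σ, S.Reachable ρ ∧ S.Reachable σ ∧
      sim a ρ σ ∧ x = dM (S.M a) ρ σ } := by
  set T := { x | ∃ a ∈ S.A, ∃ ρ σ, S.Reachable ρ ∧ S.Reachable σ ∧
      sim a ρ σ ∧ x = dM (S.M a) ρ σ }
  have hT_bdd : BddAbove T := ⟨1, by
    rintro x ⟨a, ha, ρ, σ, hρ, hσ, -, rfl⟩
    exact dM_le_one (hS.2.2 a ha) (hS.isDensity_of_reachable hρ)
      (hS.isDensity_of_reachable hσ)⟩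
  have hT_nonneg : 0 ≤ sSup T := Real.sSup_nonneg (by
    rintro x ⟨a, -, ρ, σ, -, -, -, rfl⟩
    exact dM_nonneg _ _ _)
  refine Real.sSup_le ?_ hT_nonneg
  rintro x ⟨a, ha, α, hα, rfl⟩
  have h0 := S.reachable_ρ0
  have hsim := S.rel_run_purge_run (nabla pol a) (sim a) (htrans a ha) (hstep a ha)
    (hlocal a ha) hα h0 h0 (hrefl a ha _ h0)
  rw [dM_comm]
  exact le_csSup hT_bdd ⟨a, ha, _, _, h0.run (hα.purge _ _), h0.run hα, hsim, rfl⟩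

/-- **Unwinding I.** If each agent has an equivalence relation on reachable density
operators which is step consistent and locally respects the policy, then the security
degree is bounded by the supremum of the agents' measurement distances over related
pairs of reachable states. -/
theorem unwinding_I {Agent Cmd d : Type} [Fintype d] [DecidableEq d] [Nonempty d]
    (S : QSystem Agent Cmd d) (hS : S.WellFormed)
    (pol : Agent → Agent → Prop) (hpol : ∀ a ∈ S.A, pol a a)
    (sim : Agent → Matrix d d ℂ → Matrix d d ℂ → Prop)
    (hrefl : ∀ a ∈ S.A, ∀ ρ, S.Reachable ρ → sim a ρ ρ)
    (hsymm : ∀ a ∈ S.A, ∀ ρ σ, S.Reachable ρ → S.Reachable σ →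
      sim a ρ σ → sim a σ ρ)
    (htrans : ∀ a ∈ S.A, ∀ ρ σ τ, S.Reachable ρ → S.Reachable σ → S.Reachable τ →
      sim a ρ σ → sim a σ τ → sim a ρ τ)
    (hstep : ∀ a ∈ S.A, ∀ b ∈ S.A, ∀ c ∈ S.C, ∀ ρ σ, S.Reachable ρ → S.Reachable σ →
      sim a ρ σ → sim a (S.Ecmd b c ρ) (S.Ecmd b c σ))
    (hlocal : ∀ a ∈ S.A, ∀ b ∈ S.A, ¬ pol b a → ∀ c ∈ S.C, ∀ ρ, S.Reachable ρ →
      sim a ρ (S.Ecmd b c ρ)) :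
    Kdeg S pol ≤ sSup { x | ∃ a ∈ S.A, ∃ ρ σ, S.Reachable ρ ∧ S.Reachable σ ∧
      sim a ρ σ ∧ x = dM (S.M a) ρ σ } :=
  unwinding_I_general S hS pol sim hrefl htrans hstep hlocal
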